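/- arXiv:1108.4109 — 2 statements merged into one kernel-verified Lean document; each statement's English description precedes it below -/
import Mathlib

section
/- Let 1 ≤ ρ < ∞ and let (n_k)_{k≥1} be a strictly increasing sequence of positive integers with n_1 = 1. If (x_n)_{n≥1} is a sequence of real numbers such that x_{n_k} = 0 for each k, then ‖x_n‖_{v(ρ)} ≤ 2 (∑_k ‖x_n : n_k ≤ n < n_{k+1}‖_{v(ρ)}^ρ)^{1/ρ}, where ‖x_n : n_k ≤ n < n_{k+1}‖_{v(ρ)} denotes the variation ρ-norm of the restriction of the sequence to the index set {n : n_k ≤ n < n_{k+1}}. -/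
open scoped ENNReal BigOperators

noncomputable section

/-- Variation ρ-norm of a sequence of reals over an index set `I ⊆ ℕ`:
the sup over nondecreasing sequences with values in `I` of
`(∑ⱼ |x_{n(j)} - x_{n(j+1)}|^ρ)^{1/ρ}`, valued in `ℝ≥0∞`. -/
def vNorm (ρ : ℝ) (I : Set ℕ) (x : ℕ → ℝ) : ℝ≥0∞ :=
  ⨆ (n : ℕ → ℕ) (_ : Monotone n) (_ : ∀ j, n j ∈ I),
    (∑' j : ℕ, (ENNReal.ofReal |x (n j) - x (n (j + 1))|) ^ ρ) ^ (1 / ρ)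

end

/-- Minkowski's inequality for `tsum` in `ℝ≥0∞`. -/
private lemma lp_tsum_add (f g : ℕ → ℝ≥0∞) {p : ℝ} (hp : 1 ≤ p) :
    (∑' i, (f i + g i) ^ p) ^ (1 / p) ≤
      (∑' i, f i ^ p) ^ (1 / p) + (∑' i, g i ^ p) ^ (1 / p) := by
  have hp0 : 0 < p := lt_of_lt_of_le one_pos hp
  set A := (∑' i, f i ^ p) ^ (1 / p) with hA
  set B := (∑' i, g i ^ p) ^ (1 / p) with hB
  have key : ∀ s : Finset ℕ, ∑ i ∈ s, (f i + g i) ^ p ≤ (A + B) ^ p := by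
    intro s
    have h1 : (∑ i ∈ s, (f i + g i) ^ p) ^ (1 / p) ≤ A + B := by
      refine le_trans (ENNReal.Lp_add_le s f g hp) (add_le_add ?_ ?_) <;>
        exact ENNReal.rpow_le_rpow (ENNReal.sum_le_tsum s) (by positivity)
    calc ∑ i ∈ s, (f i + g i) ^ p
        = ((∑ i ∈ s, (f i + g i) ^ p) ^ (1 / p)) ^ p := by
          rw [← ENNReal.rpow_mul, one_div, inv_mul_cancel₀ hp0.ne', ENNReal.rpow_one]
      _ ≤ (A + B) ^ p := ENNReal.rpow_le_rpow h1 hp0.le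
  have h2 : ∑' i, (f i + g i) ^ p ≤ (A + B) ^ p := by
    rw [ENNReal.tsum_eq_iSup_sum]; exact iSup_le key
  calc (∑' i, (f i + g i) ^ p) ^ (1 / p)
      ≤ ((A + B) ^ p) ^ (1 / p) := ENNReal.rpow_le_rpow h2 (by positivity)
    _ = A + B := by
        rw [← ENNReal.rpow_mul, mul_one_div, div_self hp0.ne', ENNReal.rpow_one]

/-- **Proposition 1.2.1(2).** If `x` vanishes along the strictly increasing
sequence `nk` (with `nk 0 = 1`), then the variation ρ-norm of `x` (over indices
`n ≥ 1`) is at most twice the ℓ^ρ-sum of the variation ρ-norms over the blocks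
`{n : nk k ≤ n < nk (k+1)}`. -/
theorem vNorm_le_two_mul_blocks (ρ : ℝ) (hρ : 1 ≤ ρ)
    (nk : ℕ → ℕ) (hnk : StrictMono nk) (hnk1 : nk 0 = 1)
    (x : ℕ → ℝ) (hx : ∀ k, x (nk k) = 0) :
    vNorm ρ {n : ℕ | 1 ≤ n} x ≤
      2 * (∑' k : ℕ, (vNorm ρ {n : ℕ | nk k ≤ n ∧ n < nk (k + 1)} x) ^ ρ) ^ (1 / ρ) := by
  have hρ0 : 0 < ρ := lt_of_lt_of_le one_pos hρ
  set S : ℝ≥0∞ := ∑' k : ℕ, (vNorm ρ {n : ℕ | nk k ≤ n ∧ n < nk (k + 1)} x) ^ ρ with hS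
  -- the blocks exhaust ℕ
  have hub : ∀ m : ℕ, ∃ k, m < nk (k + 1) := fun m =>
    ⟨m, lt_of_lt_of_le (Nat.lt_succ_self m) hnk.le_apply⟩
  set K : ℕ → ℕ := fun m => Nat.find (hub m) with hKdef
  have hK2 : ∀ m, m < nk (K m + 1) := fun m => Nat.find_spec (hub m)
  have hK1 : ∀ m, 1 ≤ m → nk (K m) ≤ m := by
    intro m hm
    rcases Nat.eq_zero_or_pos (K m) with h | h
    · rw [h, hnk1]; exact hm
    · obtain ⟨k, hk⟩ := Nat.exists_eq_succ_of_ne_zero h.ne'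
      have hk' : k < K m := by omega
      have h2 : ¬ (m < nk (k + 1)) := Nat.find_min (hub m) hk'
      have h3 : nk (k + 1) ≤ m := Nat.le_of_not_lt h2
      rw [hk]; exact h3
  have hKmono : Monotone K := by
    intro a b hab
    exact Nat.find_mono (fun k hk => lt_of_le_of_lt hab hk)
  -- a general bound for chains inside block k
  have chain_le : ∀ (k : ℕ) (M : ℕ → ℕ), Monotone M →
      (∀ j, M j ∈ {m : ℕ | nk k ≤ m ∧ m < nk (k + 1)}) →
      ∑' j : ℕ, (ENNReal.ofReal |x (M j) - x (M (j + 1))|) ^ ρ ≤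
        (vNorm ρ {m : ℕ | nk k ≤ m ∧ m < nk (k + 1)} x) ^ ρ := by
    intro k M hM hMmem
    have h1 : (∑' j : ℕ, (ENNReal.ofReal |x (M j) - x (M (j + 1))|) ^ ρ) ^ (1 / ρ) ≤
        vNorm ρ {m : ℕ | nk k ≤ m ∧ m < nk (k + 1)} x := by
      rw [vNorm]
      exact le_iSup_of_le M (le_iSup_of_le hM (le_iSup_of_le hMmem le_rfl))
    calc ∑' j : ℕ, (ENNReal.ofReal |x (M j) - x (M (j + 1))|) ^ ρ
        = ((∑' j : ℕ, (ENNReal.ofReal |x (M j) - x (M (j + 1))|) ^ ρ) ^ (1 / ρ)) ^ ρ := by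
          rw [← ENNReal.rpow_mul, one_div, inv_mul_cancel₀ hρ0.ne', ENNReal.rpow_one]
      _ ≤ _ := ENNReal.rpow_le_rpow h1 hρ0.le
  rw [vNorm]
  refine iSup_le fun n => iSup_le fun hmono => iSup_le fun hmem => ?_
  have hmem' : ∀ j, 1 ≤ n j := hmem
  set kk : ℕ → ℕ := fun j => K (n j) with hkk
  have hkkmono : Monotone kk := fun a b h => hKmono (hmono h)
  set D : ℕ → ℝ≥0∞ := fun j => ENNReal.ofReal |x (n j) - x (n (j + 1))| with hD
  set A : ℕ → ℝ≥0∞ := fun j =>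
    if kk j < kk (j + 1) then ENNReal.ofReal |x (n j)| else 0 with hAdef
  set Bb : ℕ → ℝ≥0∞ := fun j =>
    if kk j < kk (j + 1) then ENNReal.ofReal |x (n (j + 1))| else D j with hBbdef
  have hDle : ∀ j, D j ≤ A j + Bb j := by
    intro j
    by_cases h : kk j < kk (j + 1)
    · simp only [hAdef, hBbdef, if_pos h]
      calc D j ≤ ENNReal.ofReal (|x (n j)| + |x (n (j + 1))|) :=
            ENNReal.ofReal_le_ofReal (abs_sub _ _)
        _ ≤ _ := by
            rw [ENNReal.ofReal_add (abs_nonneg _) (abs_nonneg _)]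
    · simp only [hAdef, hBbdef, if_neg h, zero_add]
      exact le_rfl
  -- the A part
  have hA : ∑' j, A j ^ ρ ≤ S := by
    have single : ∀ j, kk j < kk (j + 1) →
        (ENNReal.ofReal |x (n j)|) ^ ρ ≤
          (vNorm ρ {m : ℕ | nk (kk j) ≤ m ∧ m < nk (kk j + 1)} x) ^ ρ := by
      intro j _
      set M : ℕ → ℕ := fun i => if i = 0 then nk (kk j) else n j with hM
      have hle : nk (kk j) ≤ n j := hK1 (n j) (hmem' j)
      have hMmono : Monotone M := by
        intro a b hab; simp only [hM]; split_ifs <;> omega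
      have hMmem : ∀ i, M i ∈ {m : ℕ | nk (kk j) ≤ m ∧ m < nk (kk j + 1)} := by
        intro i; simp only [hM]
        split_ifs
        · exact ⟨le_rfl, hnk (Nat.lt_succ_self _)⟩
        · exact ⟨hle, hK2 (n j)⟩
      have := chain_le (kk j) M hMmono hMmem
      refine le_trans ?_ this
      have h0 : (ENNReal.ofReal |x (n j)|) ^ ρ =
          (ENNReal.ofReal |x (M 0) - x (M (0 + 1))|) ^ ρ := by
        simp only [hM, if_pos rfl, if_neg (Nat.one_ne_zero), hx (kk j), zero_sub, abs_neg]
      rw [h0]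
      exact ENNReal.le_tsum 0
    set cross : Set ℕ := {j | kk j < kk (j + 1)} with hcross
    have hAeq : ∀ j, A j ^ ρ =
        Set.indicator cross (fun j => (ENNReal.ofReal |x (n j)|) ^ ρ) j := by
      intro j
      by_cases h : kk j < kk (j + 1)
      · have hj : j ∈ cross := h
        rw [Set.indicator_of_mem hj, hAdef]; simp only [if_pos h]
      · have hj : j ∉ cross := h
        rw [Set.indicator_of_notMem hj, hAdef]
        simp only [if_neg h, ENNReal.zero_rpow_of_pos hρ0]
    have hinj : Function.Injective (fun j : cross => kk j.val) := by
      rintro ⟨a, ha⟩ ⟨b, hb⟩ hab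
      simp only at hab
      ext
      rcases lt_trichotomy a b with h | h | h
      · exfalso
        have : kk (a + 1) ≤ kk b := hkkmono h
        have : kk a < kk b := lt_of_lt_of_le ha this
        omega
      · exact h
      · exfalso
        have : kk (b + 1) ≤ kk a := hkkmono h
        have : kk b < kk a := lt_of_lt_of_le hb this
        omega
    calc ∑' j, A j ^ ρ
        = ∑' j : cross, (ENNReal.ofReal |x (n j)|) ^ ρ :=
          (tsum_congr hAeq).trans (tsum_subtype cross _).symm
      _ ≤ ∑' j : cross, (vNorm ρ {m : ℕ | nk (kk j.val) ≤ m ∧ m < nk (kk j.val + 1)} x) ^ ρ :=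
          ENNReal.tsum_le_tsum fun j => single j.val j.property
      _ ≤ S := ENNReal.tsum_comp_le_tsum_of_injective hinj
          (fun k => (vNorm ρ {m : ℕ | nk k ≤ m ∧ m < nk (k + 1)} x) ^ ρ)
  -- the B part
  have hBb : ∑' j, Bb j ^ ρ ≤ S := by
    have heq : ∑' j, Bb j ^ ρ =
        ∑' k : ℕ, ∑' j : {j : ℕ // kk (j + 1) = k}, Bb j.val ^ ρ := by
      rw [← (Equiv.sigmaFiberEquiv (fun j : ℕ => kk (j + 1))).tsum_eq (fun j => Bb j ^ ρ)]
      rw [ENNReal.tsum_sigma']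
      rfl
    rw [heq]
    refine ENNReal.tsum_le_tsum fun k => ?_
    -- the clamped chain in block k
    have hkk1 : nk k < nk (k + 1) := hnk (Nat.lt_succ_self k)
    set M : ℕ → ℕ := fun i => min (max (n i) (nk k)) (nk (k + 1) - 1) with hM
    have hMmono : Monotone M := by
      intro a b hab
      have := hmono hab
      simp only [hM]; omega
    have hMmem : ∀ i, M i ∈ {m : ℕ | nk k ≤ m ∧ m < nk (k + 1)} := by
      intro i
      constructor <;> (simp only [hM]; omega)
    have hterm : ∀ j : ℕ, kk (j + 1) = k →
        Bb j ^ ρ = (ENNReal.ofReal |x (M j) - x (M (j + 1))|) ^ ρ := by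
      intro j hj
      have h1 : nk k ≤ n (j + 1) := hj ▸ hK1 (n (j + 1)) (hmem' (j + 1))
      have h2 : n (j + 1) < nk (k + 1) := hj ▸ hK2 (n (j + 1))
      have hMj1 : M (j + 1) = n (j + 1) := by simp only [hM]; omega
      have hkle : kk j ≤ k := hj ▸ hkkmono (Nat.le_succ j)
      by_cases h : kk j < kk (j + 1)
      · -- crossing pair: M j = nk k
        have h3 : n j < nk (kk j + 1) := hK2 (n j)
        have h4 : nk (kk j + 1) ≤ nk k := hnk.monotone (by omega)
        have hMj : M j = nk k := by simp only [hM]; omega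
        rw [hMj, hMj1, hx k, hBbdef]
        simp only [if_pos h, zero_sub, abs_neg]
      · -- same block: M j = n j
        have hkeq : kk j = k := by omega
        have h5 : nk k ≤ n j := hkeq ▸ hK1 (n j) (hmem' j)
        have h6 : n j < nk (k + 1) := hkeq ▸ hK2 (n j)
        have hMj : M j = n j := by simp only [hM]; omega
        rw [hMj, hMj1, hBbdef]
        simp only [if_neg h, hD]
    calc ∑' j : {j : ℕ // kk (j + 1) = k}, Bb j.val ^ ρ
        = ∑' j : {j : ℕ // kk (j + 1) = k},
            (ENNReal.ofReal |x (M j.val) - x (M (j.val + 1))|) ^ ρ :=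
          tsum_congr fun j => hterm j.val j.property
      _ ≤ ∑' i : ℕ, (ENNReal.ofReal |x (M i) - x (M (i + 1))|) ^ ρ :=
          ENNReal.tsum_comp_le_tsum_of_injective Subtype.coe_injective _
      _ ≤ _ := chain_le k M hMmono hMmem
  -- assemble
  calc (∑' j : ℕ, D j ^ ρ) ^ (1 / ρ)
      ≤ (∑' j : ℕ, (A j + Bb j) ^ ρ) ^ (1 / ρ) := by
        refine ENNReal.rpow_le_rpow (ENNReal.tsum_le_tsum fun j =>
          ENNReal.rpow_le_rpow (hDle j) hρ0.le) (by positivity)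
    _ ≤ (∑' j, A j ^ ρ) ^ (1 / ρ) + (∑' j, Bb j ^ ρ) ^ (1 / ρ) := lp_tsum_add A Bb hρ
    _ ≤ S ^ (1 / ρ) + S ^ (1 / ρ) := add_le_add
        (ENNReal.rpow_le_rpow hA (by positivity)) (ENNReal.rpow_le_rpow hBb (by positivity))
    _ = 2 * S ^ (1 / ρ) := (two_mul _).symm
end

section
/- Let (ν_i) be a sequence of strictly aperiodic probability measures on ℤ such that E(ν_i) = 0 for all i, there is a constant B with ∑_{i=1}^n m₂(ν_i)² ≤ B·n for all n, and there exist a constant C > 0 and an integer N₀ > 0 such that |ν̂_n(t)| ≤ e^{−Ct²} for all n > N₀ and all t ∈ [−1/2, 1/2). Let μ_n = ν₁ * … * ν_n. Then there is a constant C' such that for every k ≥ 1, every j ∈ ℤ with j + k ≥ 1, every n with 4^{k−1} ≤ n < 4^k, and every t with 2^{−(j+k)−1} ≤ |t| ≤ 2^{−(j+k)}, we have |μ̂_n(t) − μ̂_{4^{k−1}}(t)| ≤ C' · 4^{−|j|}. -/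
/-!
Since `μ̂ₙ = ν̂₁ ⋯ ν̂ₙ` with `|ν̂ᵢ| ≤ 1`, the difference `μ̂ₙ - μ̂_{4^k}` is controlled in two ways.
On the bands near the origin (`j ≥ 0`), each centred factor satisfies
`|ν̂ᵢ(t) - 1| ≤ 8π² t² m₂(νᵢ)`, so the difference is at most `8π² t² ∑_{i ≤ n} m₂(νᵢ)`, and by
Cauchy–Schwarz the moment hypothesis gives `∑_{i ≤ n} m₂(νᵢ) ≤ √B n`; on the band,
`t² n ≤ 4^{-j}`. On the far bands (`j < 0`), the Gaussian decay of the factors with `i > N₀` gives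
`|μ̂ₘ(t)| ≤ e^{C t² N₀} e^{-C t² m} ≤ e^{C N₀ / 4} / (C t² m)` for `m ≥ 4^k`, and on the band
`t² 4^k ≥ 4^{|j|} / 16`.
-/

open scoped ENNReal NNReal BigOperators
open MeasureTheory

noncomputable section

/-- A probability measure on ℤ, viewed as a nonnegative function summing to 1. -/
def IsProbZ (ν : ℤ → ℝ) : Prop := (∀ k, 0 ≤ ν k) ∧ HasSum ν 1

/-- Fourier transform of a measure on ℤ: ν̂(t) = ∑ₖ ν(k) e^{-2πikt}. -/
def fourierZ (ν : ℤ → ℝ) (t : ℝ) : ℂ :=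
  ∑' k : ℤ, (ν k : ℂ) * Complex.exp ((-2 * (Real.pi : ℂ) * Complex.I) * (k : ℂ) * (t : ℂ))

/-- p-th moment of a measure on ℤ. -/
def moment (p : ℝ) (ν : ℤ → ℝ) : ℝ := ∑' k : ℤ, |(k : ℝ)| ^ p * ν k

/-- ν is strictly aperiodic: its support is not contained in any coset of a
proper subgroup of ℤ. -/
def StrictlyAperiodic (ν : ℤ → ℝ) : Prop :=
  ¬ ∃ (H : AddSubgroup ℤ) (a : ℤ), H ≠ ⊤ ∧ ∀ k, ν k ≠ 0 → k - a ∈ H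

/-- Convolution of two measures on ℤ. -/
def convZ (ν₁ ν₂ : ℤ → ℝ) : ℤ → ℝ := fun k => ∑' j : ℤ, ν₁ j * ν₂ (k - j)

/-- `convProd ν n = ν 1 * ⋯ * ν n` (convolution product), with `convProd ν 0 = δ₀`. -/
def convProd (ν : ℕ → ℤ → ℝ) : ℕ → ℤ → ℝ
  | 0 => fun k => if k = 0 then 1 else 0
  | n + 1 => convZ (convProd ν n) (ν (n + 1))

/-- Oscillation s-norm of a sequence of reals relative to the increasing
sequence `nk` of indices. -/
def oNorm (s : ℝ) (nk : ℕ → ℕ) (x : ℕ → ℝ) : ℝ≥0∞ :=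
  (∑' k : ℕ,
    (⨆ (n : ℕ) (_ : nk k ≤ n ∧ n ≤ nk (k + 1)), ENNReal.ofReal |x n - x (nk k)|) ^ s) ^ (1 / s)

/-- Action of a measure on ℤ on a function via a (bi-)measure-preserving map:
`μ f (x) = ∑ⱼ μ(j) f(T^j x)`. -/
def act {X : Type*} (T : Equiv.Perm X) (μ : ℤ → ℝ) (f : X → ℝ) (x : X) : ℝ :=
  ∑' j : ℤ, μ j * f ((T ^ j) x)

end

open scoped Real
open Complex (I)

theorem hasSum_tsum_mul_sub_of_summable_norm {G R : Type*} [AddCommGroup G] [NormedRing R]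
    [CompleteSpace R] {f g : G → R} (hf : Summable fun j => ‖f j‖) (hg : Summable fun m => ‖g m‖) :
    HasSum (fun k => ∑' j, f j * g (k - j)) ((∑' j, f j) * ∑' m, g m) := by
  let shear : G × G ≃ G × G :=
    { toFun := fun q => (q.2, q.1 - q.2)
      invFun := fun p => (p.1 + p.2, p.1)
      left_inv := fun q => by simp
      right_inv := fun p => by simp }
  have hprod : HasSum (fun p : G × G => f p.1 * g p.2) ((∑' j, f j) * ∑' m, g m) := by
    rw [tsum_mul_tsum_of_summable_norm hf hg]
    exact (summable_mul_of_summable_norm hf hg).hasSum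
  have hsheared : HasSum (fun q : G × G => f q.2 * g (q.1 - q.2)) ((∑' j, f j) * ∑' m, g m) :=
    shear.hasSum_iff.2 hprod
  exact hsheared.prod_fiberwise fun k => (hsheared.summable.prod_factor k).hasSum

theorem hasSum_convZ {ν₁ ν₂ : ℤ → ℝ} (h₁ : Summable ν₁) (h₂ : Summable ν₂) :
    HasSum (convZ ν₁ ν₂) ((∑' k, ν₁ k) * ∑' k, ν₂ k) :=
  hasSum_tsum_mul_sub_of_summable_norm h₁.norm h₂.norm

theorem exp_neg_two_pi_I_mul_add (j m : ℤ) (t : ℝ) :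
    Complex.exp (-2 * π * I * ((j + m : ℤ) : ℂ) * t) =
      Complex.exp (-2 * π * I * j * t) * Complex.exp (-2 * π * I * m * t) := by
  rw [← Complex.exp_add]
  push_cast
  ring_nf

theorem fourierZ_add_one (ν : ℤ → ℝ) (t : ℝ) : fourierZ ν (t + 1) = fourierZ ν t := by
  refine tsum_congr fun k => congrArg _ ?_
  rw [show -2 * π * I * k * ((t + 1 : ℝ) : ℂ) = -2 * π * I * k * t + (-k : ℤ) * (2 * π * I) by
    push_cast; ring, Complex.exp_add, Complex.exp_int_mul_two_pi_mul_I, mul_one]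

theorem norm_ofReal_mul_exp_neg_two_pi_I_mul (x : ℝ) (k : ℤ) (t : ℝ) :
    ‖(x : ℂ) * Complex.exp (-2 * π * I * k * t)‖ = |x| := by
  simp [Complex.norm_exp]

theorem norm_fourierZ_le_exp_of_abs_le_half {ν : ℤ → ℝ} {C t : ℝ}
    (h : ∀ t ∈ Set.Ico (-(1 : ℝ) / 2) (1 / 2), ‖fourierZ ν t‖ ≤ Real.exp (-C * t ^ 2))
    (ht : |t| ≤ 1 / 2) : ‖fourierZ ν t‖ ≤ Real.exp (-C * t ^ 2) := by
  obtain ⟨hlo, hhi⟩ := abs_le.1 ht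
  rcases hhi.lt_or_eq with hlt | rfl
  · exact h t ⟨by linarith, hlt⟩
  · have := h (-(1 / 2)) (by norm_num)
    rwa [← fourierZ_add_one, neg_sq, show -(1 / 2) + 1 = (1 / 2 : ℝ) by norm_num] at this

theorem norm_fourierZ_le_one {ν : ℤ → ℝ} (hν : IsProbZ ν) (t : ℝ) : ‖fourierZ ν t‖ ≤ 1 := by
  have hnorm : ∀ k : ℤ, ‖(ν k : ℂ) * Complex.exp (-2 * π * I * k * t)‖ = ν k := fun k => by
    rw [norm_ofReal_mul_exp_neg_two_pi_I_mul, abs_of_nonneg (hν.1 k)]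
  calc ‖fourierZ ν t‖ ≤ ∑' k : ℤ, ‖(ν k : ℂ) * Complex.exp (-2 * π * I * k * t)‖ :=
        norm_tsum_le_tsum_norm (by simpa only [hnorm] using hν.2.summable)
    _ = 1 := by simpa only [hnorm] using hν.2.tsum_eq

theorem fourierZ_convZ {ν₁ ν₂ : ℤ → ℝ} (h₁ : Summable ν₁) (h₂ : Summable ν₂) (t : ℝ) :
    fourierZ (convZ ν₁ ν₂) t = fourierZ ν₁ t * fourierZ ν₂ t := by
  set e : ℤ → ℂ := fun k => Complex.exp (-2 * π * I * k * t)
  have hfiber : ∀ k, ∑' j, (ν₁ j : ℂ) * e j * ((ν₂ (k - j) : ℂ) * e (k - j)) =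
      (convZ ν₁ ν₂ k : ℂ) * e k := fun k => by
    have he : ∀ j, e j * e (k - j) = e k := fun j => by
      rw [← exp_neg_two_pi_I_mul_add, add_sub_cancel]
    calc _ = ∑' j, ((ν₁ j * ν₂ (k - j) : ℝ) : ℂ) * e k :=
          tsum_congr fun j => by rw [← he j]; push_cast; ring
      _ = (convZ ν₁ ν₂ k : ℂ) * e k := by rw [tsum_mul_right, ← Complex.ofReal_tsum]; rfl
  have hprod := hasSum_tsum_mul_sub_of_summable_norm (f := fun k => (ν₁ k : ℂ) * e k)
    (g := fun k => (ν₂ k : ℂ) * e k)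
    (by simpa only [e, norm_ofReal_mul_exp_neg_two_pi_I_mul] using h₁.abs)
    (by simpa only [e, norm_ofReal_mul_exp_neg_two_pi_I_mul] using h₂.abs)
  simp_rw [hfiber] at hprod
  exact hprod.tsum_eq

theorem summable_convProd {ν : ℕ → ℤ → ℝ} (hν : ∀ i, 1 ≤ i → Summable (ν i)) (n : ℕ) :
    Summable (convProd ν n) := by
  induction n with
  | zero => exact (hasSum_ite_eq 0 1).summable
  | succ n ih => exact (hasSum_convZ ih (hν _ n.succ_pos)).summable

theorem fourierZ_convProd {ν : ℕ → ℤ → ℝ} (hν : ∀ i, 1 ≤ i → Summable (ν i)) (n : ℕ) (t : ℝ) :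
    fourierZ (convProd ν n) t = ∏ i ∈ Finset.Ioc 0 n, fourierZ (ν i) t := by
  induction n with
  | zero =>
    rw [Finset.Ioc_self, Finset.prod_empty, fourierZ,
      tsum_eq_single 0 fun k hk => by simp [convProd, hk]]
    simp [convProd]
  | succ n ih =>
    rw [convProd, fourierZ_convZ (summable_convProd hν n) (hν _ n.succ_pos), ih,
      Finset.prod_Ioc_succ_top n.zero_le]

theorem norm_exp_I_mul_sub_one_sub_le (x : ℝ) :
    ‖Complex.exp (I * x) - 1 - I * x‖ ≤ 2 * x ^ 2 := by
  have hIx : ‖I * (x : ℂ)‖ = |x| := by simp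
  rcases le_or_gt |x| 1 with hx | hx
  · calc _ ≤ ‖I * (x : ℂ)‖ ^ 2 := Complex.norm_exp_sub_one_sub_id_le (hIx ▸ hx)
      _ ≤ 2 * x ^ 2 := by rw [hIx, sq_abs]; linarith [sq_nonneg x]
  · calc _ ≤ ‖Complex.exp (I * x) - 1‖ + ‖I * (x : ℂ)‖ := norm_sub_le _ _
      _ ≤ |x| + |x| := by
          rw [hIx, ← Real.norm_eq_abs]; gcongr; exact Real.norm_exp_I_mul_ofReal_sub_one_le
      _ ≤ 2 * x ^ 2 := by nlinarith [sq_abs x]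

theorem moment_two_nonneg {ν : ℤ → ℝ} (hν : ∀ k, 0 ≤ ν k) : 0 ≤ moment 2 ν :=
  tsum_nonneg fun k => mul_nonneg (by positivity) (hν k)

/-- Since `ν` is centred, `ν̂(t) - 1 = ∑ ν(k) (e^{-2πikt} - 1 + 2πikt)`, and each bracket is
`O((kt)²)`. -/
theorem norm_fourierZ_sub_one_le {ν : ℤ → ℝ} (hν : IsProbZ ν)
    (hm : Summable fun k : ℤ => |(k : ℝ)| ^ (2 : ℝ) * ν k)
    (hz : HasSum (fun k : ℤ => (k : ℝ) * ν k) 0) (t : ℝ) :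
    ‖fourierZ ν t - 1‖ ≤ 8 * π ^ 2 * t ^ 2 * moment 2 ν := by
  set c : ℂ := 2 * π * I * t
  set a : ℤ → ℂ := fun k => (ν k : ℂ) * (Complex.exp (-2 * π * I * k * t) - 1 + c * k)
  have hsq : ∀ k : ℤ, |(k : ℝ)| ^ (2 : ℝ) = (k : ℝ) ^ 2 := fun k => by
    rw [Real.rpow_two, sq_abs]
  have ha : HasSum a (fourierZ ν t - 1) := by
    have hF : Summable fun k : ℤ => (ν k : ℂ) * Complex.exp (-2 * π * I * k * t) :=
      .of_norm (by simpa only [norm_ofReal_mul_exp_neg_two_pi_I_mul] using hν.2.summable.abs)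
    have := (hF.hasSum.sub (Complex.ofRealCLM.hasSum hν.2)).add
      ((Complex.ofRealCLM.hasSum hz).mul_left c)
    simp only [Complex.ofRealCLM_apply, Complex.ofReal_one, Complex.ofReal_zero, mul_zero,
      add_zero] at this
    exact this.congr_fun fun k => by simp only [a]; push_cast; ring
  have hbound : ∀ k : ℤ, ‖a k‖ ≤ 8 * π ^ 2 * t ^ 2 * (|(k : ℝ)| ^ (2 : ℝ) * ν k) := fun k => by
    have hx : Complex.exp (-2 * π * I * k * t) - 1 + c * k =
        Complex.exp (I * ((-(2 * π * k * t) : ℝ) : ℂ)) - 1 - I * ((-(2 * π * k * t) : ℝ) : ℂ) := by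
      simp only [c]; push_cast; ring_nf
    calc ‖a k‖ = ν k * ‖Complex.exp (-2 * π * I * k * t) - 1 + c * k‖ := by
          rw [norm_mul, Complex.norm_real, Real.norm_of_nonneg (hν.1 k)]
      _ ≤ ν k * (2 * (-(2 * π * k * t)) ^ 2) := by
          rw [hx]; exact mul_le_mul_of_nonneg_left (norm_exp_I_mul_sub_one_sub_le _) (hν.1 k)
      _ = 8 * π ^ 2 * t ^ 2 * (|(k : ℝ)| ^ (2 : ℝ) * ν k) := by rw [hsq]; ring
  calc ‖fourierZ ν t - 1‖ = ‖∑' k, a k‖ := by rw [ha.tsum_eq]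
    _ ≤ ∑' k : ℤ, 8 * π ^ 2 * t ^ 2 * (|(k : ℝ)| ^ (2 : ℝ) * ν k) :=
        tsum_of_norm_bounded (hm.mul_left _).hasSum hbound
    _ = 8 * π ^ 2 * t ^ 2 * moment 2 ν := tsum_mul_left

theorem Finset.norm_prod_sub_one_le {ι R : Type*} [SeminormedCommRing R] (s : Finset ι)
    (z : ι → R) (hz : ∀ i ∈ s, ‖z i‖ ≤ 1) : ‖∏ i ∈ s, z i - 1‖ ≤ ∑ i ∈ s, ‖z i - 1‖ := by
  classical
  induction s using Finset.induction_on with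
  | empty => simp
  | insert a s ha ih =>
    rw [Finset.prod_insert ha, Finset.sum_insert ha]
    have hza : ‖z a‖ ≤ 1 := hz a (Finset.mem_insert_self a s)
    have hs := ih fun i hi => hz i (Finset.mem_insert_of_mem hi)
    calc ‖z a * ∏ i ∈ s, z i - 1‖ = ‖z a * (∏ i ∈ s, z i - 1) + (z a - 1)‖ := by ring_nf
      _ ≤ ‖z a‖ * ‖∏ i ∈ s, z i - 1‖ + ‖z a - 1‖ :=
          (norm_add_le _ _).trans (by gcongr; exact norm_mul_le _ _)
      _ ≤ ‖z a - 1‖ + ∑ i ∈ s, ‖z i - 1‖ := by nlinarith [norm_nonneg (∏ i ∈ s, z i - 1)]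

theorem norm_prod_fourierZ_le_one {ν : ℕ → ℤ → ℝ} (hprob : ∀ i, 1 ≤ i → IsProbZ (ν i))
    (a b : ℕ) (t : ℝ) : ‖∏ i ∈ Finset.Ioc a b, fourierZ (ν i) t‖ ≤ 1 := by
  rw [norm_prod]
  exact Finset.prod_le_one (fun _ _ => norm_nonneg _) fun i hi =>
    norm_fourierZ_le_one (hprob i (Nat.one_le_of_lt (Finset.mem_Ioc.1 hi).1)) t

theorem norm_fourierZ_convProd_sub_le {ν : ℕ → ℤ → ℝ} (hprob : ∀ i, 1 ≤ i → IsProbZ (ν i))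
    (hmom : ∀ i, 1 ≤ i → Summable fun k : ℤ => |(k : ℝ)| ^ (2 : ℝ) * ν i k)
    (hexp : ∀ i, 1 ≤ i → HasSum (fun k : ℤ => (k : ℝ) * ν i k) 0) {m n : ℕ} (hmn : m ≤ n)
    (t : ℝ) :
    ‖fourierZ (convProd ν n) t - fourierZ (convProd ν m) t‖ ≤
      8 * π ^ 2 * t ^ 2 * ∑ i ∈ Finset.Ioc m n, moment 2 (ν i) := by
  have hsum i (hi : 1 ≤ i) := (hprob i hi).2.summable
  have hpos {i : ℕ} (hi : i ∈ Finset.Ioc m n) : 1 ≤ i := Nat.one_le_of_lt (Finset.mem_Ioc.1 hi).1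
  rw [fourierZ_convProd hsum, fourierZ_convProd hsum,
    ← Finset.prod_Ioc_consecutive _ m.zero_le hmn, ← mul_sub_one, norm_mul, Finset.mul_sum]
  calc _ ≤ 1 * ∑ i ∈ Finset.Ioc m n, ‖fourierZ (ν i) t - 1‖ := by
        gcongr
        · exact norm_prod_fourierZ_le_one hprob 0 m t
        · exact Finset.norm_prod_sub_one_le _ _ fun i hi =>
            norm_fourierZ_le_one (hprob i (hpos hi)) t
    _ ≤ _ := by
        rw [one_mul]
        exact Finset.sum_le_sum fun i hi =>
          norm_fourierZ_sub_one_le (hprob i (hpos hi)) (hmom i (hpos hi)) (hexp i (hpos hi)) t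

theorem norm_fourierZ_convProd_le_pow {ν : ℕ → ℤ → ℝ} (hprob : ∀ i, 1 ≤ i → IsProbZ (ν i))
    {N₀ : ℕ} {t r : ℝ} (hr : ∀ i, N₀ < i → ‖fourierZ (ν i) t‖ ≤ r) (n : ℕ) :
    ‖fourierZ (convProd ν n) t‖ ≤ r ^ (n - N₀) := by
  rw [fourierZ_convProd fun i hi => (hprob i hi).2.summable]
  rcases le_total n N₀ with hn | hn
  · rw [Nat.sub_eq_zero_of_le hn, pow_zero]
    exact norm_prod_fourierZ_le_one hprob 0 n t
  rw [← Finset.prod_Ioc_consecutive _ N₀.zero_le hn, norm_mul, ← Nat.card_Ioc, ← one_mul (r ^ _)]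
  gcongr
  · exact norm_prod_fourierZ_le_one hprob 0 N₀ t
  · rw [norm_prod, ← Finset.prod_const]
    exact Finset.prod_le_prod (fun _ _ => norm_nonneg _) fun i hi => hr i (Finset.mem_Ioc.1 hi).1

theorem mul_norm_fourierZ_convProd_le_exp {ν : ℕ → ℤ → ℝ} (hprob : ∀ i, 1 ≤ i → IsProbZ (ν i))
    {C : ℝ} (hC : 0 ≤ C) {N₀ : ℕ} {t : ℝ}
    (hdecay : ∀ i, N₀ < i → ‖fourierZ (ν i) t‖ ≤ Real.exp (-C * t ^ 2)) (n : ℕ) :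
    C * t ^ 2 * n * ‖fourierZ (convProd ν n) t‖ ≤ Real.exp (C * t ^ 2 * N₀) := by
  set y := C * t ^ 2 * n
  have hexp : ‖fourierZ (convProd ν n) t‖ ≤ Real.exp (C * t ^ 2 * N₀) * Real.exp (-y) := by
    refine (norm_fourierZ_convProd_le_pow hprob hdecay n).trans ?_
    rw [← Real.exp_nat_mul, ← Real.exp_add, Real.exp_le_exp]
    have hsub : (n : ℝ) - N₀ ≤ ((n - N₀ : ℕ) : ℝ) := by
      simp only [sub_le_iff_le_add]; norm_cast; omega
    have hCt : 0 ≤ C * t ^ 2 := by positivity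
    nlinarith
  calc y * ‖fourierZ (convProd ν n) t‖ ≤ y * (Real.exp (C * t ^ 2 * N₀) * Real.exp (-y)) := by
        gcongr
    _ = Real.exp (C * t ^ 2 * N₀) * (y * Real.exp (-y)) := by ring
    _ ≤ Real.exp (C * t ^ 2 * N₀) * 1 := by
        gcongr
        rw [Real.exp_neg, mul_inv_le_iff₀ (Real.exp_pos y), one_mul]
        linarith [Real.add_one_le_exp y]
    _ = _ := mul_one _

theorem Finset.sum_le_sqrt_mul_card_of_sum_sq_le {ι : Type*} (s : Finset ι) (a : ι → ℝ) {B : ℝ}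
    (h : ∑ i ∈ s, a i ^ 2 ≤ B * s.card) : ∑ i ∈ s, a i ≤ √B * s.card := by
  have hsq : (∑ i ∈ s, a i) ^ 2 ≤ B * s.card ^ 2 :=
    calc (∑ i ∈ s, a i) ^ 2 ≤ s.card * ∑ i ∈ s, a i ^ 2 := sq_sum_le_card_mul_sum_sq
      _ ≤ s.card * (B * s.card) := by gcongr
      _ = B * s.card ^ 2 := by ring
  calc ∑ i ∈ s, a i ≤ |∑ i ∈ s, a i| := le_abs_self _
    _ ≤ √(B * s.card ^ 2) := Real.abs_le_sqrt hsq
    _ = √B * s.card := by rw [Real.sqrt_mul' _ (by positivity), Real.sqrt_sq (by positivity)]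

theorem norm_fourierZ_convProd_sub_le_sqrt_mul {ν : ℕ → ℤ → ℝ}
    (hprob : ∀ i, 1 ≤ i → IsProbZ (ν i))
    (hmom : ∀ i, 1 ≤ i → Summable fun k : ℤ => |(k : ℝ)| ^ (2 : ℝ) * ν i k)
    (hexp : ∀ i, 1 ≤ i → HasSum (fun k : ℤ => (k : ℝ) * ν i k) 0) {B : ℝ}
    (hB : ∀ n : ℕ, 1 ≤ n → ∑ i ∈ Finset.Icc 1 n, moment 2 (ν i) ^ 2 ≤ B * n) {m n : ℕ}
    (hm : 1 ≤ m) (hmn : m ≤ n) (t : ℝ) :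
    ‖fourierZ (convProd ν n) t - fourierZ (convProd ν m) t‖ ≤ 8 * π ^ 2 * √B * (t ^ 2 * n) := by
  have hcard : ((Finset.Icc 1 n).card : ℝ) = n := by simp
  have hsum : ∑ i ∈ Finset.Ioc m n, moment 2 (ν i) ≤ √B * n := by
    refine (Finset.sum_le_sum_of_subset_of_nonneg (t := Finset.Icc 1 n) (fun i hi => ?_)
      fun i hi _ => ?_).trans ?_
    · exact Finset.mem_Icc.2 ⟨hm.trans (Finset.mem_Ioc.1 hi).1.le, (Finset.mem_Ioc.1 hi).2⟩
    · exact moment_two_nonneg (hprob i (Finset.mem_Icc.1 hi).1).1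
    · have hBn := hB n (hm.trans hmn)
      rw [← hcard] at hBn ⊢
      exact Finset.sum_le_sqrt_mul_card_of_sum_sq_le _ _ hBn
  calc _ ≤ 8 * π ^ 2 * t ^ 2 * ∑ i ∈ Finset.Ioc m n, moment 2 (ν i) :=
        norm_fourierZ_convProd_sub_le hprob hmom hexp hmn t
    _ ≤ 8 * π ^ 2 * t ^ 2 * (√B * n) := by gcongr
    _ = 8 * π ^ 2 * √B * (t ^ 2 * n) := by ring

theorem norm_fourierZ_convProd_le_div {ν : ℕ → ℤ → ℝ} (hprob : ∀ i, 1 ≤ i → IsProbZ (ν i))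
    {C : ℝ} (hC : 0 < C) {N₀ : ℕ} {t : ℝ} (ht : |t| ≤ 1 / 2)
    (hdecay : ∀ i, N₀ < i → ‖fourierZ (ν i) t‖ ≤ Real.exp (-C * t ^ 2)) {m : ℕ} {s : ℝ}
    (hs : 0 < s) (hsm : s ≤ t ^ 2 * m) :
    ‖fourierZ (convProd ν m) t‖ ≤ Real.exp (C * N₀ / 4) / (C * s) := by
  have ht2 : t ^ 2 ≤ 1 / 4 := by nlinarith [sq_abs t, abs_nonneg t]
  rw [le_div_iff₀' (by positivity)]
  calc C * s * ‖fourierZ (convProd ν m) t‖ ≤ C * t ^ 2 * m * ‖fourierZ (convProd ν m) t‖ := by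
        rw [mul_assoc C (t ^ 2)]; gcongr
    _ ≤ Real.exp (C * t ^ 2 * N₀) := mul_norm_fourierZ_convProd_le_exp hprob hC.le hdecay m
    _ ≤ Real.exp (C * N₀ / 4) := by
        gcongr; nlinarith [mul_nonneg hC.le (Nat.cast_nonneg (α := ℝ) N₀)]

theorem sq_mul_four_pow_mem_Icc {j : ℤ} {k : ℕ} {t : ℝ}
    (hlo : (2 : ℝ) ^ (-(j + (k : ℤ) + 1) - 1) ≤ |t|) (hhi : |t| ≤ (2 : ℝ) ^ (-(j + (k : ℤ) + 1))) :
    (4 : ℝ) ^ (-j) / 16 ≤ t ^ 2 * 4 ^ k ∧ t ^ 2 * 4 ^ k ≤ (4 : ℝ) ^ (-j) / 4 := by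
  have hsq (a : ℤ) : ((2 : ℝ) ^ a) ^ 2 = 4 ^ a := by
    rw [← zpow_natCast, ← zpow_mul, mul_comm, zpow_mul]; norm_num
  have hshift (a : ℤ) : (4 : ℝ) ^ (-(j + k + 1) - a) * 4 ^ k = 4 ^ (-j) / 4 ^ (a + 1) := by
    rw [← zpow_natCast, ← zpow_add₀ four_ne_zero, ← zpow_sub₀ four_ne_zero]; ring_nf
  have hlo2 := pow_le_pow_left₀ (by positivity) hlo 2
  have hhi2 := pow_le_pow_left₀ (abs_nonneg t) hhi 2
  rw [hsq, sq_abs] at hlo2 hhi2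
  constructor
  · calc (4 : ℝ) ^ (-j) / 16 = 4 ^ (-(j + k + 1) - 1) * 4 ^ k := by rw [hshift]; norm_num
      _ ≤ t ^ 2 * 4 ^ k := by gcongr
  · calc t ^ 2 * 4 ^ k ≤ 4 ^ (-(j + k + 1) - 0) * 4 ^ k := by rw [sub_zero]; gcongr
      _ = (4 : ℝ) ^ (-j) / 4 := by rw [hshift]; norm_num

/-- The paper's block index `k` is `k + 1` here: the blocks are `4^k ≤ n < 4^{k+1}`. -/
theorem kernel_fourier_band_bound_general
    (ν : ℕ → ℤ → ℝ)
    (hprob : ∀ i, 1 ≤ i → IsProbZ (ν i))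
    (hmom : ∀ i, 1 ≤ i → Summable (fun k : ℤ => |(k : ℝ)| ^ (2 : ℝ) * ν i k))
    (hexp : ∀ i, 1 ≤ i → HasSum (fun k : ℤ => (k : ℝ) * ν i k) 0)
    (B : ℝ) (hB : ∀ n : ℕ, 1 ≤ n → ∑ i ∈ Finset.Icc 1 n, (moment 2 (ν i)) ^ 2 ≤ B * n)
    (C : ℝ) (hC : 0 < C) (N₀ : ℕ)
    (hfour : ∀ n, N₀ < n → ∀ t ∈ Set.Ico (-(1 : ℝ)/2) (1/2),
      ‖fourierZ (ν n) t‖ ≤ Real.exp (-C * t ^ 2))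
    (μ : ℕ → ℤ → ℝ) (hμ : μ = convProd ν) :
    ∃ C' : ℝ, 0 ≤ C' ∧ ∀ k : ℕ, ∀ j : ℤ, 1 ≤ j + (k + 1 : ℤ) →
      ∀ n : ℕ, 4 ^ k ≤ n → n < 4 ^ (k + 1) →
        ∀ t : ℝ, (2 : ℝ) ^ (-(j + (k : ℤ) + 1) - 1) ≤ |t| → |t| ≤ (2 : ℝ) ^ (-(j + (k : ℤ) + 1)) →
          ‖fourierZ (μ n) t - fourierZ (μ (4 ^ k)) t‖ ≤ C' / (4 : ℝ) ^ |j| := by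
  subst hμ
  set K := Real.exp (C * N₀ / 4)
  refine ⟨8 * π ^ 2 * √B + 32 * K / C, by positivity, ?_⟩
  intro k j hjk n hkn hnk t hlo hhi
  obtain ⟨hband_lo, hband_hi⟩ := sq_mul_four_pow_mem_Icc hlo hhi
  have ht : |t| ≤ 1 / 2 := hhi.trans <| by
    calc (2 : ℝ) ^ (-(j + (k : ℤ) + 1)) ≤ 2 ^ (-1 : ℤ) := zpow_le_zpow_right₀ one_le_two (by omega)
      _ = 1 / 2 := by norm_num
  rcases le_or_gt 0 j with hj | hj
  · have hn : t ^ 2 * n ≤ 4 ^ (-j) := by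
      have : (n : ℝ) ≤ 4 * 4 ^ k := by exact_mod_cast (pow_succ' 4 k ▸ hnk).le
      nlinarith [sq_nonneg t]
    rw [abs_of_nonneg hj, div_eq_mul_inv, ← zpow_neg]
    calc _ ≤ 8 * π ^ 2 * √B * (t ^ 2 * n) :=
          norm_fourierZ_convProd_sub_le_sqrt_mul hprob hmom hexp hB (Nat.one_le_pow k 4 four_pos)
            hkn t
      _ ≤ (8 * π ^ 2 * √B + 32 * K / C) * 4 ^ (-j) := by
          gcongr
          exact le_add_of_nonneg_right (by positivity)
  · have hfar (m : ℕ) (hm : 4 ^ k ≤ m) :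
        ‖fourierZ (convProd ν m) t‖ ≤ K / (C * (4 ^ |j| / 16)) := by
      refine norm_fourierZ_convProd_le_div hprob hC ht
        (fun i hi => norm_fourierZ_le_exp_of_abs_le_half (hfour i hi) ht) (by positivity) ?_
      rw [abs_of_neg hj]
      refine hband_lo.trans ?_
      gcongr
      exact_mod_cast hm
    calc _ ≤ ‖fourierZ (convProd ν n) t‖ + ‖fourierZ (convProd ν (4 ^ k)) t‖ := norm_sub_le _ _
      _ ≤ K / (C * (4 ^ |j| / 16)) + K / (C * (4 ^ |j| / 16)) :=
          add_le_add (hfar n hkn) (hfar _ le_rfl)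
      _ = 32 * K / C / 4 ^ |j| := by field_simp; ring
      _ ≤ _ := by
          gcongr
          exact le_add_of_nonneg_left (by positivity)

/-- **Lemma 1.4.7(1).** On the dyadic band `2^{-(j+k)-1} ≤ |t| ≤ 2^{-(j+k)}`,
`|K̂ₙ(t)| = |μ̂ₙ(t) - μ̂_{4^{k-1}}(t)| ≤ C'·4^{-|j|}` for `4^{k-1} ≤ n < 4^k`.
(Here the blocks are written as `4^k ≤ n < 4^{k+1}`, i.e. the paper's `k` is
`k + 1`.) -/
theorem kernel_fourier_band_bound
    (ν : ℕ → ℤ → ℝ)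
    (hprob : ∀ i, 1 ≤ i → IsProbZ (ν i))
    (haper : ∀ i, 1 ≤ i → StrictlyAperiodic (ν i))
    (hmom : ∀ i, 1 ≤ i → Summable (fun k : ℤ => |(k : ℝ)| ^ (2 : ℝ) * ν i k))
    (hexp : ∀ i, 1 ≤ i → HasSum (fun k : ℤ => (k : ℝ) * ν i k) 0)
    (B : ℝ) (hB : ∀ n : ℕ, 1 ≤ n → ∑ i ∈ Finset.Icc 1 n, (moment 2 (ν i)) ^ 2 ≤ B * n)
    (C : ℝ) (hC : 0 < C) (N₀ : ℕ) (hN₀ : 0 < N₀)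
    (hfour : ∀ n, N₀ < n → ∀ t ∈ Set.Ico (-(1 : ℝ)/2) (1/2),
      ‖fourierZ (ν n) t‖ ≤ Real.exp (-C * t ^ 2))
    (μ : ℕ → ℤ → ℝ) (hμ : μ = convProd ν) :
    ∃ C' : ℝ, 0 ≤ C' ∧ ∀ k : ℕ, ∀ j : ℤ, 1 ≤ j + (k + 1 : ℤ) →
      ∀ n : ℕ, 4 ^ k ≤ n → n < 4 ^ (k + 1) →
        ∀ t : ℝ, (2 : ℝ) ^ (-(j + (k : ℤ) + 1) - 1) ≤ |t| → |t| ≤ (2 : ℝ) ^ (-(j + (k : ℤ) + 1)) →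
          ‖fourierZ (μ n) t - fourierZ (μ (4 ^ k)) t‖ ≤ C' / (4 : ℝ) ^ |j| :=
  kernel_fourier_band_bound_general ν hprob hmom hexp B hB C hC N₀ hfour μ hμ
end
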